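/- Let G = (V, E) be a finite simple undirected unweighted graph, let 𝒞 be a collection of pairwise disjoint subsets of V, and let H be a spanning subgraph of G satisfying the missing-edge property (every edge of G absent from H has its two endpoints in two different clusters of 𝒞) and the cluster-diameter property (any two vertices in the same cluster of 𝒞 are at distance at most 2 in H). Let ρ be a shortest path in G and let C ∈ 𝒞 be a cluster. Then the number of pairs (u, e), where e is an edge of ρ that is not an edge of H and u is an endpoint of e belonging to C, is at most 4. -/

import Mathlib

/-!
Along a shortest walk the distance between two of its vertices equals the number of steps
between them. Since `H ≤ G`, a cluster has `G`-diameter at most 2, so its vertices on `ρ` lie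
within three consecutive positions, and at most four edges of `ρ` touch the cluster. A missing
edge cannot have both endpoints in one cluster, so each such edge accounts for at most one pair.
-/

namespace SimpleGraph.Walk

variable {V : Type*} {G : SimpleGraph V} {u v : V}

lemma edist_getVert_getVert_of_length_eq_dist (p : G.Walk u v) (hp : p.length = G.dist u v)
    {i j : ℕ} (hij : i ≤ j) (hj : j ≤ p.length) :
    G.edist (p.getVert i) (p.getVert j) = (j - i : ℕ) := by
  let q : G.Walk (p.getVert i) (p.getVert j) :=
    ((p.take j).drop i).copy (by rw [take_getVert, min_eq_right hij]) rfl
  have hsub : q.IsSubwalk p :=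
    (((p.take j).isSubwalk_drop i).copy _ _ rfl rfl).trans (p.isSubwalk_take j)
  have hq : q.length = j - i := by simp [q, min_eq_left hj]
  rw [← q.reachable.coe_dist_eq_edist, ← length_eq_dist_of_subwalk hp hsub, hq]

lemma le_add_of_length_eq_dist (p : G.Walk u v) (hp : p.length = G.dist u v)
    {i j d : ℕ} (hij : i ≤ j) (hj : j ≤ p.length)
    (hd : G.edist (p.getVert i) (p.getVert j) ≤ d) : j ≤ i + d := by
  rw [p.edist_getVert_getVert_of_length_eq_dist hp hij hj, Nat.cast_le] at hd
  omega

lemma exists_getVert_of_mem_edges (p : G.Walk u v) {x : V} {e : Sym2 V} (he : e ∈ p.edges)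
    (hx : x ∈ e) : ∃ k < p.length, e = s(p.getVert k, p.getVert (k + 1)) ∧
      (x = p.getVert k ∨ x = p.getVert (k + 1)) := by
  obtain ⟨k, hk, rfl⟩ := List.mem_iff_getElem.mp he
  rw [getElem_edges] at hx ⊢
  exact ⟨k, p.length_edges ▸ hk, rfl, Sym2.mem_iff.mp hx⟩

lemma ncard_edges_meeting_le_of_length_eq_dist (p : G.Walk u v) (hp : p.length = G.dist u v)
    {K : Set V} {d : ℕ} (hK : ∀ x ∈ K, ∀ y ∈ K, G.edist x y ≤ d) :
    {e | e ∈ p.edges ∧ ∃ x ∈ K, x ∈ e}.ncard ≤ d + 2 := by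
  classical
  set meeting := {e | e ∈ p.edges ∧ ∃ x ∈ K, x ∈ e}
  have hpos : ∀ e ∈ meeting, ∃ k < p.length, e = s(p.getVert k, p.getVert (k + 1)) ∧
      ∃ q, k ≤ q ∧ q ≤ k + 1 ∧ p.getVert q ∈ K := by
    rintro e ⟨he, x, hxK, hxe⟩
    obtain ⟨k, hk, rfl, rfl | rfl⟩ := p.exists_getVert_of_mem_edges he hxe
    exacts [⟨k, hk, rfl, k, le_rfl, k.le_succ, hxK⟩, ⟨k, hk, rfl, k + 1, k.le_succ, le_rfl, hxK⟩]
  obtain hempty | ⟨e₀, he₀⟩ := meeting.eq_empty_or_nonempty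
  · simp [hempty]
  have hmeet : ∃ q ≤ p.length, p.getVert q ∈ K := by
    obtain ⟨k, hk, -, q, -, hq, hqK⟩ := hpos e₀ he₀
    exact ⟨q, by omega, hqK⟩
  set m := Nat.find hmeet
  obtain ⟨-, hmK⟩ := Nat.find_spec hmeet
  -- `m` is the first position of `K` on `p`; every later one is at most `m + d`
  set window := (Finset.Icc (m - 1) (m + d)).image fun k ↦ s(p.getVert k, p.getVert (k + 1))
  have hwindow : meeting ⊆ window := by
    intro e he
    obtain ⟨k, hk, rfl, q, hkq, hqk, hqK⟩ := hpos e he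
    have hmq : m ≤ q := Nat.find_min' hmeet ⟨by omega, hqK⟩
    have hqm : q ≤ m + d := p.le_add_of_length_eq_dist hp hmq (by omega) (hK _ hmK _ hqK)
    simp only [window, Finset.coe_image, Finset.coe_Icc]
    exact ⟨k, ⟨by omega, by omega⟩, rfl⟩
  calc meeting.ncard ≤ (window : Set (Sym2 V)).ncard :=
        Set.ncard_le_ncard hwindow window.finite_toSet
    _ ≤ (Finset.Icc (m - 1) (m + d)).card := by
        rw [Set.ncard_coe_finset]
        exact Finset.card_image_le
    _ ≤ d + 2 := by
        rw [Nat.card_Icc]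
        omega

end SimpleGraph.Walk

open SimpleGraph

lemma notMem_cluster_of_missing_edge {V : Type*} {G H : SimpleGraph V} {𝒞 : Finset (Finset V)}
    (hdisj : (𝒞 : Set (Finset V)).Pairwise fun C₁ C₂ => Disjoint C₁ C₂)
    (hmiss : ∀ u v : V, G.Adj u v → ¬ H.Adj u v →
      ∃ C₁ ∈ 𝒞, ∃ C₂ ∈ 𝒞, C₁ ≠ C₂ ∧ u ∈ C₁ ∧ v ∈ C₂)
    {a b : V} (hG : G.Adj a b) (hH : ¬ H.Adj a b) {C : Finset V} (hC : C ∈ 𝒞) (ha : a ∈ C) :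
    b ∉ C := by
  intro hb
  have hdisj' : (𝒞 : Set (Finset V)).PairwiseDisjoint id := hdisj
  obtain ⟨C₁, hC₁, C₂, hC₂, hne, ha₁, hb₂⟩ := hmiss a b hG hH
  exact hne <| (hdisj'.elim_finset hC₁ hC a ha₁ ha).trans (hdisj'.elim_finset hC hC₂ b hb hb₂)

theorem cluster_owns_few_pairs_general
    (V : Type)
    (G H : SimpleGraph V) (hHG : H ≤ G)
    (𝒞 : Finset (Finset V))
    (hdisj : (𝒞 : Set (Finset V)).Pairwise fun C₁ C₂ => Disjoint C₁ C₂)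
    (hmiss : ∀ u v : V, G.Adj u v → ¬ H.Adj u v →
      ∃ C₁ ∈ 𝒞, ∃ C₂ ∈ 𝒞, C₁ ≠ C₂ ∧ u ∈ C₁ ∧ v ∈ C₂)
    (hdiam : ∀ C ∈ 𝒞, ∀ u ∈ C, ∀ v ∈ C, H.edist u v ≤ 2)
    (u v : V) (ρ : G.Walk u v) (hshort : ρ.length = G.dist u v)
    (C : Finset V) (hc : C ∈ 𝒞) :
    ({p : V × Sym2 V |
        p.1 ∈ C ∧ p.2 ∈ ρ.edges ∧ p.2 ∉ H.edgeSet ∧ p.1 ∈ p.2} :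
      Set (V × Sym2 V)).ncard ≤ 4 := by
  have hCdiam : ∀ x ∈ (C : Set V), ∀ y ∈ (C : Set V), G.edist x y ≤ (2 : ℕ) :=
    fun x hx y hy ↦ (edist_anti hHG).trans (hdiam C hc x hx y hy)
  refine (Set.ncard_le_ncard_of_injOn Prod.snd ?_ ?_ ?_).trans
    (ρ.ncard_edges_meeting_le_of_length_eq_dist hshort hCdiam)
  · rintro ⟨x, e⟩ ⟨hxC, he, -, hxe⟩
    exact ⟨he, x, hxC, hxe⟩
  · rintro ⟨x₁, e⟩ ⟨hx₁C, he, heH, hx₁e⟩ ⟨x₂, e'⟩ ⟨hx₂C, -, -, hx₂e⟩ (rfl : e = e')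
    by_contra hne
    obtain rfl : e = s(x₁, x₂) := (Sym2.mem_and_mem_iff fun h ↦ hne (by rw [h])).mp ⟨hx₁e, hx₂e⟩
    exact notMem_cluster_of_missing_edge hdisj hmiss (ρ.adj_of_mem_edges he) heH hc hx₁C hx₂C
  · exact ρ.edges.finite_toSet.subset fun e he ↦ he.1

/-- Under the missing-edge and cluster-diameter properties, for any shortest path
`ρ` in `G` and any cluster `C ∈ 𝒞`, the number of pairs `(u, e)` where `e` is an
edge of `ρ` absent from `H` and `u ∈ C` is an endpoint of `e` is at most `4`. -/
theorem cluster_owns_few_pairs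
    (V : Type) [Fintype V] [DecidableEq V]
    (G H : SimpleGraph V) (hHG : H ≤ G)
    (𝒞 : Finset (Finset V))
    (hdisj : (𝒞 : Set (Finset V)).Pairwise fun C₁ C₂ => Disjoint C₁ C₂)
    (hmiss : ∀ u v : V, G.Adj u v → ¬ H.Adj u v →
      ∃ C₁ ∈ 𝒞, ∃ C₂ ∈ 𝒞, C₁ ≠ C₂ ∧ u ∈ C₁ ∧ v ∈ C₂)
    (hdiam : ∀ C ∈ 𝒞, ∀ u ∈ C, ∀ v ∈ C, H.edist u v ≤ 2)
    (u v : V) (ρ : G.Walk u v) (hpath : ρ.IsPath) (hshort : ρ.length = G.dist u v)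
    (C : Finset V) (hc : C ∈ 𝒞) :
    ({p : V × Sym2 V |
        p.1 ∈ C ∧ p.2 ∈ ρ.edges ∧ p.2 ∉ H.edgeSet ∧ p.1 ∈ p.2} :
      Set (V × Sym2 V)).ncard ≤ 4 :=
  cluster_owns_few_pairs_general V G H hHG 𝒞 hdisj hmiss hdiam u v ρ hshort C hc
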